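/- (CCP representation under (ρ+1)-period finite dependence; Proposition 4.) Let X be a finite nonempty set and D a finite set of actions with baseline 0, β ∈ ℝ, ρ ≥ 1. Let V : X → ℝ, v : D × X → ℝ, u : D × X → ℝ, e : D × X → ℝ, f : D × X → X → ℝ satisfy, for all d, x: V(x) = v(d, x) + e(d, x) and v(d, x) = u(d, x) + β Σ_{x'} f(x' | d, x) V(x'). For s = 1, …, ρ let w_s : D × X → ℝ with Σ_d w_s(d, x) = 1 for all x, and let F(w_s) be the X×X matrix with (x, x') entry Σ_d w_s(d, x) f(x' | d, x), and c(w_s)(x) = Σ_d w_s(d, x)(u(d, x) + e(d, x)). Suppose that for all d ∈ D and x ∈ X the row vector f̃(· | d, x)ᵀ F(w_1) ⋯ F(w_ρ) is zero, where f̃(· | d, x) = f(· | d, x) − f(· | 0, x). Then the value differences admit the finite-horizon representation ṽ(d, x) := v(d, x) − v(0, x) = ũ(d, x) + Σ_{τ=1}^{ρ} β^τ f̃(· | d, x)ᵀ ( F(w_1) ⋯ F(w_{τ−1}) ) c(w_τ) for all d, x, where ũ(d, x) = u(d, x) − u(0, x) and the empty product is the identity; in particular ṽ does not depend on V. -/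

import Mathlib

/- Averaging the identities `V = v(d,·) + e(d,·)` and the Bellman equations with weights `w_s`
summing to one shows that `V` is a fixed point of every weighted Bellman operator
`V ↦ c(w_s) + β F(w_s) V`. Unrolling these fixed-point equations ρ times expands
`f̃(·|d,x)ᵀ V` into the finite sum of the statement plus `β^ρ f̃(·|d,x)ᵀ F(w₁) ⋯ F(w_ρ) V`,
and finite dependence kills this remainder. -/

open Matrix

/-- The `w`-weighted one-step transition matrix with `(x, x')` entry
`Σ_d w(d, x) f(x' | d, x)`. -/
noncomputable def statTransMatrix {X D : Type*} [Fintype X] [Fintype D]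
    (f : D → X → X → ℝ) (w : D → X → ℝ) : Matrix X X ℝ :=
  Matrix.of fun x x' => ∑ d : D, w d x * f d x x'

/-- The partial products `F(w₁) ⋯ F(w_k)` of weighted transition matrices; the empty
product (`k = 0`) is the identity matrix. -/
noncomputable def prodTransMatrix {X D : Type*} [Fintype X] [DecidableEq X]
    [Fintype D] (f : D → X → X → ℝ) (ws : ℕ → D → X → ℝ) : ℕ → Matrix X X ℝ
  | 0 => 1
  | (k + 1) => prodTransMatrix f ws k * statTransMatrix f (ws (k + 1))

/-- The `w`-weighted vector `c(w)` with entry `Σ_d w(d, x) (u(d, x) + e(d, x))`. -/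
noncomputable def weightedPayoff {X D : Type*} [Fintype D]
    (u e : D → X → ℝ) (w : D → X → ℝ) : X → ℝ :=
  fun x => ∑ d : D, w d x * (u d x + e d x)

open Finset

section

variable {X D : Type*} [Fintype X] [Fintype D]

theorem eq_weightedPayoff_add_smul_statTransMatrix_mulVec {β : ℝ} {V : X → ℝ}
    {v u e : D → X → ℝ} {f : D → X → X → ℝ}
    (hAM : ∀ d x, V x = v d x + e d x)
    (hBellman : ∀ d x, v d x = u d x + β * ∑ x', f d x x' * V x')
    {w : D → X → ℝ} (hw : ∀ x, ∑ d, w d x = 1) :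
    V = weightedPayoff u e w + β • statTransMatrix f w *ᵥ V := by
  funext y
  have hVd : ∀ d, V y = (u d y + e d y) + β * ∑ x', f d y x' * V x' := fun d => by
    rw [hAM d y, hBellman d y]; ring
  calc V y = ∑ d, w d y * ((u d y + e d y) + β * ∑ x', f d y x' * V x') := by
        simp only [← hVd, ← sum_mul, hw, one_mul]
    _ = _ := by
        simp only [Pi.add_apply, Pi.smul_apply, smul_eq_mul, weightedPayoff, mulVec,
          dotProduct, statTransMatrix, of_apply, mul_add, sum_add_distrib, mul_sum, sum_mul]
        rw [sum_comm (f := fun d x' => w d y * (β * (f d y x' * V x')))]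
        congr 1
        exact sum_congr rfl fun _ _ => sum_congr rfl fun _ _ => by ring

theorem dotProduct_eq_of_eq_add_smul_mulVec {β : ℝ} {V c : X → ℝ} {M : Matrix X X ℝ}
    (hV : V = c + β • M *ᵥ V) (a : X → ℝ) :
    a ⬝ᵥ V = a ⬝ᵥ c + β * ((a ᵥ* M) ⬝ᵥ V) := by
  conv_lhs => rw [hV]
  rw [dotProduct_add, dotProduct_smul, dotProduct_mulVec, smul_eq_mul]

theorem dotProduct_eq_sum_add_prodTransMatrix [DecidableEq X] {β : ℝ} {V : X → ℝ}
    {f : D → X → X → ℝ} {ws : ℕ → D → X → ℝ} {c : ℕ → X → ℝ} {k : ℕ}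
    (hV : ∀ s, 1 ≤ s → s ≤ k → V = c s + β • statTransMatrix f (ws s) *ᵥ V) (g : X → ℝ) :
    g ⬝ᵥ V = ∑ τ ∈ range k, β ^ τ * ((g ᵥ* prodTransMatrix f ws τ) ⬝ᵥ c (τ + 1))
      + β ^ k * ((g ᵥ* prodTransMatrix f ws k) ⬝ᵥ V) := by
  induction k with
  | zero => simp [prodTransMatrix]
  | succ k ih =>
    rw [ih fun s h1 h2 => hV s h1 (h2.trans k.le_succ),
      dotProduct_eq_of_eq_add_smul_mulVec (hV (k + 1) (Nat.le_add_left 1 k) le_rfl),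
      vecMul_vecMul, sum_range_succ, prodTransMatrix]
    ring

end

theorem ccp_representation_finite_dependence_general
    {X D : Type*} [Fintype X] [DecidableEq X] [Fintype D]
    (d₀ : D) (β : ℝ) (ρ : ℕ)
    (V : X → ℝ) (v : D → X → ℝ) (u : D → X → ℝ) (e : D → X → ℝ)
    (f : D → X → X → ℝ)
    (hAM : ∀ (d : D) (x : X), V x = v d x + e d x)
    (hBellman : ∀ (d : D) (x : X),
      v d x = u d x + β * ∑ x' : X, f d x x' * V x')
    (ws : ℕ → D → X → ℝ)
    (hw : ∀ s, 1 ≤ s → s ≤ ρ → ∀ x : X, ∑ d : D, ws s d x = 1)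
    (hdep : ∀ (d : D) (x : X),
      (fun x₁ => f d x x₁ - f d₀ x x₁) ᵥ* prodTransMatrix f ws ρ = 0) :
    ∀ (d : D) (x : X),
      v d x - v d₀ x = (u d x - u d₀ x)
        + ∑ τ ∈ Finset.range ρ, β ^ (τ + 1) *
            ∑ x' : X,
              ((fun x₁ => f d x x₁ - f d₀ x x₁) ᵥ* prodTransMatrix f ws τ) x' *
                weightedPayoff u e (ws (τ + 1)) x' := by
  intro d x
  have hV : ∀ s, 1 ≤ s → s ≤ ρ →
      V = weightedPayoff u e (ws s) + β • statTransMatrix f (ws s) *ᵥ V := fun s h1 h2 =>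
    eq_weightedPayoff_add_smul_statTransMatrix_mulVec hAM hBellman (hw s h1 h2)
  have hdiff : v d x - v d₀ x =
      (u d x - u d₀ x) + β * ((fun x₁ => f d x x₁ - f d₀ x x₁) ⬝ᵥ V) := by
    rw [hBellman d x, hBellman d₀ x]
    simp only [dotProduct, sub_mul, sum_sub_distrib]
    ring
  rw [hdiff, dotProduct_eq_sum_add_prodTransMatrix hV, hdep d x, zero_dotProduct, mul_zero,
    add_zero, mul_sum]
  congr 1
  exact sum_congr rfl fun τ _ => by rw [pow_succ', mul_assoc]; rfl

/-- CCP representation under (ρ+1)-period finite dependence (Proposition 4): if the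
forward product `f̃(·|d,x)ᵀ F(w₁) ⋯ F(w_ρ)` vanishes for every state–action pair, the
value differences admit a finite-horizon representation in terms of flow payoffs and
the ψ-corrections `e`; in particular they do not depend on `V`. -/
theorem ccp_representation_finite_dependence
    {X D : Type*} [Fintype X] [DecidableEq X] [Nonempty X] [Fintype D]
    (d₀ : D) (β : ℝ) (ρ : ℕ) (hρ : 1 ≤ ρ)
    (V : X → ℝ) (v : D → X → ℝ) (u : D → X → ℝ) (e : D → X → ℝ)
    (f : D → X → X → ℝ)
    (hAM : ∀ (d : D) (x : X), V x = v d x + e d x)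
    (hBellman : ∀ (d : D) (x : X),
      v d x = u d x + β * ∑ x' : X, f d x x' * V x')
    (ws : ℕ → D → X → ℝ)
    (hw : ∀ s, 1 ≤ s → s ≤ ρ → ∀ x : X, ∑ d : D, ws s d x = 1)
    (hdep : ∀ (d : D) (x : X),
      (fun x₁ => f d x x₁ - f d₀ x x₁) ᵥ* prodTransMatrix f ws ρ = 0) :
    ∀ (d : D) (x : X),
      v d x - v d₀ x = (u d x - u d₀ x)
        + ∑ τ ∈ Finset.range ρ, β ^ (τ + 1) *
            ∑ x' : X,
              ((fun x₁ => f d x x₁ - f d₀ x x₁) ᵥ* prodTransMatrix f ws τ) x' *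
                weightedPayoff u e (ws (τ + 1)) x' :=
  ccp_representation_finite_dependence_general d₀ β ρ V v u e f hAM hBellman ws hw hdep
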